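/- Let θ > 0, T > 0, α > 0, a > 0, b ≥ 0, and define g(n) = a/n + b/√n on (0, ∞) and h(n, γ) = 2θT e^{2θnT} + (α/γ) g′(n) 2^{g(n)} ln 2 for n, γ > 0. Suppose 0 < γ < γ′ and n, n′ > 0 satisfy h(n, γ) = 0 and h(n′, γ′) = 0. Then n′ < n. That is, the stationary sampling interval is strictly decreasing in the channel-state SNR. -/

import Mathlib

/-!
Solving `h(n, γ) = 0` for the exponential term gives `2θT e^{2θnT} = (α/γ) R(n)` with
`R(n) = -g'(n) 2^{g(n)} ln 2`. The left side is nondecreasing in `n`, while `R` is positive and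
nonincreasing, because both `-g'` and `g` are. Raising the SNR lowers the coefficient `α/γ`, so
the root cannot move to the right.
-/

open Real Set

theorem lt_of_eq_mul_of_monotoneOn_of_antitoneOn {s : Set ℝ} {f R : ℝ → ℝ} {c c' x x' : ℝ}
    (hf : MonotoneOn f s) (hR : AntitoneOn R s) (hR_pos : ∀ y ∈ s, 0 < R y) (hc : 0 ≤ c)
    (hc' : c' < c) (hx : x ∈ s) (hx' : x' ∈ s) (h : f x = c * R x) (h' : f x' = c' * R x') :
    x' < x := by
  by_contra! hle
  refine lt_irrefl (f x) ?_
  calc f x ≤ f x' := hf hx hx' hle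
    _ = c' * R x' := h'
    _ < c * R x' := mul_lt_mul_of_pos_right hc' (hR_pos x' hx')
    _ ≤ c * R x := mul_le_mul_of_nonneg_left (hR hx hx' hle) hc
    _ = f x := h.symm

theorem monotone_mul_exp_mul {θ T : ℝ} (hθ : 0 ≤ θ) (hT : 0 ≤ T) :
    Monotone fun n : ℝ => 2 * θ * T * exp (2 * θ * n * T) := by
  intro n n' hn
  dsimp only
  gcongr

theorem antitoneOn_div_add_div_sqrt {a b : ℝ} (ha : 0 ≤ a) (hb : 0 ≤ b) :
    AntitoneOn (fun n : ℝ => a / n + b / √n) (Ioi 0) := by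
  intro n hn n' _ hnn'
  have : 0 < n := hn
  dsimp only
  gcongr

theorem antitoneOn_div_sq_add_div_rpow {a b : ℝ} (ha : 0 ≤ a) (hb : 0 ≤ b) :
    AntitoneOn (fun n : ℝ => a / n ^ 2 + b / (2 * n ^ ((3 : ℝ) / 2))) (Ioi 0) := by
  intro n hn n' _ hnn'
  have : 0 < n := hn
  dsimp only
  gcongr

theorem antitoneOn_rate_cost {a b : ℝ} (ha : 0 ≤ a) (hb : 0 ≤ b) :
    AntitoneOn (fun n : ℝ => (a / n ^ 2 + b / (2 * n ^ ((3 : ℝ) / 2))) *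
      (2 : ℝ) ^ (a / n + b / √n) * log 2) (Ioi 0) := by
  intro n hn n' hn' hnn'
  have : 0 < n := hn
  have hP := antitoneOn_div_sq_add_div_rpow ha hb hn hn' hnn'
  have hg := rpow_le_rpow_of_exponent_le one_le_two (antitoneOn_div_add_div_sqrt ha hb hn hn' hnn')
  beta_reduce at hP hg
  exact mul_le_mul_of_nonneg_right (mul_le_mul hP hg (by positivity) (by positivity))
    (log_nonneg one_le_two)

theorem rate_cost_pos {a b n : ℝ} (ha : 0 < a) (hb : 0 ≤ b) (hn : 0 < n) :
    0 < (a / n ^ 2 + b / (2 * n ^ ((3 : ℝ) / 2))) * (2 : ℝ) ^ (a / n + b / √n) * log 2 := by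
  have : 0 < log 2 := log_pos one_lt_two
  positivity

/-- Core of Lemma 1 (finite AoI exponent): if the KKT stationarity condition
`h(n, γ) = 0` holds at SNRs `γ < γ'` with respective slot numbers `n, n' > 0`,
then `n' < n`; the stationary sampling interval strictly decreases in the SNR.
Here `h(n, γ) = 2θT e^{2θnT} + (α/γ) g'(n) 2^{g(n)} ln 2` with
`g(n) = a/n + b/√n` and `g'(n) = -a/n² - b/(2 n^{3/2})`. -/
theorem stationary_sampling_interval_decreasing_in_snr
    (θ T α a b : ℝ) (hθ : 0 < θ) (hT : 0 < T) (hα : 0 < α) (ha : 0 < a)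
    (hb : 0 ≤ b) (γ γ' n n' : ℝ) (hγ : 0 < γ) (hγγ' : γ < γ')
    (hn : 0 < n) (hn' : 0 < n')
    (hroot : 2 * θ * T * Real.exp (2 * θ * n * T) +
        (α / γ) * (-(a / n ^ 2) - b / (2 * n ^ ((3 : ℝ) / 2))) *
          (2 : ℝ) ^ (a / n + b / Real.sqrt n) * Real.log 2 = 0)
    (hroot' : 2 * θ * T * Real.exp (2 * θ * n' * T) +
        (α / γ') * (-(a / n' ^ 2) - b / (2 * n' ^ ((3 : ℝ) / 2))) *
          (2 : ℝ) ^ (a / n' + b / Real.sqrt n') * Real.log 2 = 0) :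
    n' < n := by
  refine lt_of_eq_mul_of_monotoneOn_of_antitoneOn ((monotone_mul_exp_mul hθ.le hT.le).monotoneOn _)
    (antitoneOn_rate_cost ha.le hb) (fun _ hy => rate_cost_pos ha hb hy) (div_pos hα hγ).le
    (div_lt_div_of_pos_left hα hγ hγγ') hn hn' ?_ ?_
  · linear_combination hroot
  · linear_combination hroot'
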